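/- arXiv:0706.4297 — 5 statements merged into one kernel-verified Lean document; each statement's English description precedes it below -/
import Mathlib

section
/- For any a ∈ ℓ²(Λ) and τ > 0, the soft-thresholded vector S_τ(a) is the unique minimizer over x ∈ ℓ²(Λ) of the functional ‖x - a‖² + 2τ‖x‖₁ (with the convention that ‖x‖₁ = ∞ if x ∉ ℓ¹). -/
open scoped ENNReal NNReal

noncomputable def softThr (τ t : ℝ) : ℝ := Real.sign t * max (|t| - τ) 0

/-- The `ℓ¹` "norm" with value in `ℝ≥0∞` (equal to `∞` when the sequence is not in `ℓ¹`). -/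
noncomputable def l1e {I : Type*} (x : I → ℝ) : ℝ≥0∞ := ∑' i, (‖x i‖₊ : ℝ≥0∞)

/-- The squared `ℓ²` distance with value in `ℝ≥0∞`. -/
noncomputable def dist2e {I : Type*} (x a : I → ℝ) : ℝ≥0∞ :=
  ∑' i, ENNReal.ofReal ((x i - a i) ^ 2)

/-
The function `y ↦ (y - a)² + 2τ|y|` is 2-strongly convex with minimizer `S_τ(a)`, so it exceeds its
minimum by at least `(y - S_τ(a))²`. Summing over coordinates, the objective at any `x` exceeds the
objective at `S_τ(a)` by `‖x - S_τ(a)‖²`, which is positive for `x ≠ S_τ(a)`; the objective at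
`S_τ(a)` is finite, being at most the objective `‖a‖²` at `x = 0`.
-/

section SoftThreshold

variable {τ : ℝ}

lemma softThr_eq_ite (hτ : 0 ≤ τ) (a : ℝ) :
    softThr τ a = if a ≤ -τ then a + τ else if τ ≤ a then a - τ else 0 := by
  unfold softThr
  rcases lt_trichotomy a 0 with ha | rfl | ha
  · rw [Real.sign_of_neg ha, abs_of_neg ha]
    split_ifs <;> first | linarith | (rw [max_eq_left (by linarith)]; ring) |
      (rw [max_eq_right (by linarith)]; ring)
  · split_ifs <;> simp only [Real.sign_zero, zero_mul] <;> linarith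
  · rw [Real.sign_of_pos ha, abs_of_pos ha]
    split_ifs <;> first | linarith | (rw [max_eq_left (by linarith)]; ring) |
      (rw [max_eq_right (by linarith)]; ring)

lemma abs_softThr_le (hτ : 0 ≤ τ) (a : ℝ) : |softThr τ a| ≤ |a| := by
  rw [softThr_eq_ite hτ]
  split_ifs <;> rw [← sq_le_sq] <;> nlinarith

lemma softThr_quadratic_growth (hτ : 0 ≤ τ) (a x : ℝ) :
    (softThr τ a - a) ^ 2 + 2 * τ * |softThr τ a| + (x - softThr τ a) ^ 2
      ≤ (x - a) ^ 2 + 2 * τ * |x| := by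
  rw [softThr_eq_ite hτ]
  rcases abs_cases x with ⟨hx, _⟩ | ⟨hx, _⟩ <;> rw [hx] <;> split_ifs <;>
    first
      | (rw [abs_zero]; nlinarith)
      | (rw [abs_of_nonpos (by linarith)]; nlinarith)
      | (rw [abs_of_nonneg (by linarith)]; nlinarith)

end SoftThreshold

section Objective

variable {I : Type*}

lemma dist2e_add_mul_l1e (x a : I → ℝ) (c : ℝ≥0∞) :
    dist2e x a + c * l1e x = ∑' i, (ENNReal.ofReal ((x i - a i) ^ 2) + c * ‖x i‖₊) := by
  rw [dist2e, l1e, ENNReal.tsum_add, ENNReal.tsum_mul_left]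

lemma dist2e_ne_zero {x y : I → ℝ} (hxy : x ≠ y) : dist2e x y ≠ 0 := by
  obtain ⟨i, hi⟩ := Function.ne_iff.mp hxy
  refine (lt_of_lt_of_le ?_ (ENNReal.le_tsum i)).ne'
  have : x i - y i ≠ 0 := sub_ne_zero.mpr hi
  exact ENNReal.ofReal_pos.mpr (by positivity)

lemma Memℓp.dist2e_ne_top {x a : I → ℝ} (hx : Memℓp x 2) (ha : Memℓp a 2) : dist2e x a ≠ ⊤ := by
  have hsum : Summable fun i => (x i - a i) ^ 2 := by
    simpa [Real.rpow_two, Real.norm_eq_abs, sq_abs] using (hx.sub ha).summable (by norm_num)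
  rw [dist2e, ← ENNReal.ofReal_tsum_of_nonneg (fun i => sq_nonneg _) hsum]
  exact ENNReal.ofReal_ne_top

variable {τ : ℝ}

lemma softThr_quadratic_growth_tsum (hτ : 0 ≤ τ) (a x : I → ℝ) :
    dist2e (fun i => softThr τ (a i)) a + 2 * ENNReal.ofReal τ * l1e (fun i => softThr τ (a i))
        + dist2e x (fun i => softThr τ (a i))
      ≤ dist2e x a + 2 * ENNReal.ofReal τ * l1e x := by
  have hpen (t : ℝ) : 2 * ENNReal.ofReal τ * ‖t‖₊ = ENNReal.ofReal (2 * τ * |t|) := by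
    rw [ENNReal.ofReal_mul' (abs_nonneg t), ← Real.enorm_eq_ofReal_abs,
      ENNReal.ofReal_mul zero_le_two, ENNReal.ofReal_ofNat]
    rfl
  rw [dist2e_add_mul_l1e, dist2e_add_mul_l1e, dist2e, ← ENNReal.tsum_add]
  refine ENNReal.tsum_le_tsum fun i => ?_
  rw [hpen, hpen, ← ENNReal.ofReal_add (by positivity) (by positivity),
    ← ENNReal.ofReal_add (by positivity) (by positivity),
    ← ENNReal.ofReal_add (by positivity) (by positivity)]
  exact ENNReal.ofReal_le_ofReal (softThr_quadratic_growth hτ (a i) (x i))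

end Objective

theorem stmt2_general {I : Type*} (a : I → ℝ) (ha : Memℓp a 2) (τ : ℝ) (hτ : 0 < τ) :
    Memℓp (fun i => softThr τ (a i)) 2 ∧
    ∀ x : I → ℝ, Memℓp x 2 → x ≠ (fun i => softThr τ (a i)) →
      dist2e (fun i => softThr τ (a i)) a + 2 * ENNReal.ofReal τ * l1e (fun i => softThr τ (a i))
        < dist2e x a + 2 * ENNReal.ofReal τ * l1e x := by
  set s : I → ℝ := fun i => softThr τ (a i)
  have hgrowth := softThr_quadratic_growth_tsum hτ.le a
  refine ⟨ha.mono' fun i => abs_softThr_le hτ.le (a i), fun x _ hxs => ?_⟩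
  have hfin : dist2e s a + 2 * ENNReal.ofReal τ * l1e s ≠ ⊤ := by
    have hzero := hgrowth 0
    simp only [l1e, Pi.zero_apply, nnnorm_zero, ENNReal.coe_zero, tsum_zero, mul_zero,
      add_zero] at hzero
    exact ne_top_of_le_ne_top (zero_memℓp.dist2e_ne_top ha) (le_self_add.trans hzero)
  calc dist2e s a + 2 * ENNReal.ofReal τ * l1e s
      < dist2e s a + 2 * ENNReal.ofReal τ * l1e s + dist2e x s :=
        ENNReal.lt_add_right hfin (dist2e_ne_zero hxs)
    _ ≤ _ := hgrowth x

/-- For any `a ∈ ℓ²(Λ)` and `τ > 0`, `S_τ(a)` is the unique minimizer over `x ∈ ℓ²(Λ)` of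
`‖x - a‖² + 2τ‖x‖₁` (with `‖x‖₁ = ∞` if `x ∉ ℓ¹`). -/
theorem stmt2 {I : Type*} [Countable I] (a : I → ℝ) (ha : Memℓp a 2) (τ : ℝ) (hτ : 0 < τ) :
    Memℓp (fun i => softThr τ (a i)) 2 ∧
    ∀ x : I → ℝ, Memℓp x 2 → x ≠ (fun i => softThr τ (a i)) →
      dist2e (fun i => softThr τ (a i)) a + 2 * ENNReal.ofReal τ * l1e (fun i => softThr τ (a i))
        < dist2e x a + 2 * ENNReal.ofReal τ * l1e x :=
  stmt2_general a ha τ hτ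
end

section
/- Let a ∈ ℓ²(Λ) with ‖a‖₁ > R > 0 (allowing ‖a‖₁ = ∞). If μ > 0 satisfies ‖S_μ(a)‖₁ = R, then the ℓ² projection of a onto the ℓ¹-ball B_R = {x ∈ ℓ² : ‖x‖₁ ≤ R} equals S_μ(a); that is, S_μ(a) is the unique point of B_R minimizing the ℓ² distance to a. -/
open scoped ENNReal NNReal

lemma soft_zero {μ t : ℝ} (h : |t| ≤ μ) : softThr μ t = 0 := by
  unfold softThr; rw [max_eq_right (by linarith)]; ring

lemma soft_pos {μ t : ℝ} (hμ : 0 < μ) (h : μ < t) : softThr μ t = t - μ := by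
  unfold softThr
  rw [Real.sign_of_pos (by linarith), abs_of_pos (by linarith),
    max_eq_left (by linarith)]; ring

lemma soft_neg {μ t : ℝ} (hμ : 0 < μ) (h : t < -μ) : softThr μ t = t + μ := by
  unfold softThr
  rw [Real.sign_of_neg (by linarith), abs_of_neg (by linarith),
    max_eq_left (by linarith)]; ring

lemma soft_key (μ : ℝ) (hμ : 0 < μ) (x t : ℝ) :
    (x - softThr μ t) * (t - softThr μ t) ≤ μ * (|x| - |softThr μ t|) := by
  rcases le_or_gt (|t|) μ with h|h
  · rw [soft_zero h]
    simp only [sub_zero, abs_zero]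
    calc x * t ≤ |x * t| := le_abs_self _
      _ = |x| * |t| := abs_mul x t
      _ ≤ |x| * μ := by nlinarith [abs_nonneg x]
      _ = μ * |x| := by ring
  · rcases lt_or_ge 0 t with ht|ht
    · have h' : μ < t := by rwa [abs_of_pos ht] at h
      rw [soft_pos hμ h', abs_of_nonneg (by linarith : (0:ℝ) ≤ t - μ)]
      nlinarith [le_abs_self x]
    · have h' : t < -μ := by rw [abs_of_nonpos ht] at h; linarith
      rw [soft_neg hμ h', abs_of_nonpos (by linarith : t + μ ≤ 0)]
      nlinarith [neg_abs_le x]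

lemma soft_diff_le (μ : ℝ) (hμ : 0 < μ) (t : ℝ) : |t - softThr μ t| ≤ μ := by
  rcases le_or_gt (|t|) μ with h|h
  · rw [soft_zero h]; simpa using h
  · rcases lt_or_ge 0 t with ht|ht
    · rw [soft_pos hμ (by rwa [abs_of_pos ht] at h)]
      simp [abs_of_pos hμ]
    · rw [soft_neg hμ (by rw [abs_of_nonpos ht] at h; linarith)]
      simp [abs_of_pos hμ]

lemma memℓp_two_iff {I : Type*} (f : I → ℝ) : Memℓp f 2 ↔ Summable (fun i => (f i)^2) := by
  rw [memℓp_gen_iff (by norm_num : 0 < (2:ℝ≥0∞).toReal)]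
  apply summable_congr
  intro i
  have : ((2:ℝ≥0∞).toReal) = ((2:ℕ):ℝ) := by norm_num
  rw [this, Real.rpow_natCast, Real.norm_eq_abs, sq_abs]

lemma l1e_summable {I : Type*} {f : I → ℝ} (h : l1e f ≠ ⊤) :
    Summable (fun i => |f i|) := by
  have h1 : Summable (fun i => ‖f i‖₊) := ENNReal.tsum_coe_ne_top_iff_summable.mp h
  have := NNReal.summable_coe.mpr h1
  simpa only [coe_nnnorm, Real.norm_eq_abs] using this

lemma l1e_eq {I : Type*} {f : I → ℝ} (h : Summable (fun i => |f i|)) :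
    l1e f = ENNReal.ofReal (∑' i, |f i|) := by
  have h1 : Summable (fun i => ‖f i‖₊) := by
    rw [← NNReal.summable_coe]
    simpa only [coe_nnnorm, Real.norm_eq_abs] using h
  rw [l1e, ← ENNReal.coe_tsum h1, ENNReal.ofReal]
  congr 1
  apply NNReal.coe_injective
  rw [NNReal.coe_tsum, Real.coe_toNNReal _ (tsum_nonneg (fun i => abs_nonneg _))]
  exact tsum_congr fun i => by simp [Real.norm_eq_abs]


/-- If `a ∈ ℓ²`, `‖a‖₁ > R > 0` (possibly `‖a‖₁ = ∞`) and `μ > 0` satisfies `‖S_μ(a)‖₁ = R`,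
then `S_μ(a)` is the unique point of the `ℓ¹`-ball `B_R` minimizing the `ℓ²` distance to `a`:
it is the `ℓ²` projection of `a` onto `B_R`. -/
theorem stmt3 {I : Type*} [Countable I] (a : I → ℝ) (ha : Memℓp a 2) (R : ℝ) (hR : 0 < R)
    (haR : ENNReal.ofReal R < l1e a) (μ : ℝ) (hμ : 0 < μ)
    (hμR : ∑' i, |softThr μ (a i)| = R) :
    (Memℓp (fun i => softThr μ (a i)) 2 ∧ l1e (fun i => softThr μ (a i)) ≤ ENNReal.ofReal R) ∧
    ∀ x : I → ℝ, Memℓp x 2 → l1e x ≤ ENNReal.ofReal R → x ≠ (fun i => softThr μ (a i)) →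
      ∑' i, (softThr μ (a i) - a i) ^ 2 < ∑' i, (x i - a i) ^ 2 := by
  set s : I → ℝ := fun i => softThr μ (a i) with hs_def
  -- summability of |s|
  have hs_abs : Summable (fun i => |s i|) := by
    by_contra hns
    rw [tsum_eq_zero_of_not_summable hns] at hμR
    linarith
  have hs_le : ∀ i, |s i| ≤ R := by
    intro i
    rw [← hμR]
    exact Summable.le_tsum hs_abs i (fun j _ => abs_nonneg _)
  have hs2 : Summable (fun i => (s i)^2) := by
    apply Summable.of_nonneg_of_le (fun i => sq_nonneg _) (fun i => ?_) (hs_abs.mul_left R)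
    calc (s i)^2 = |s i| * |s i| := by rw [← abs_mul, ← sq, abs_of_nonneg (sq_nonneg _)]
      _ ≤ R * |s i| := by nlinarith [abs_nonneg (s i), hs_le i]
  have hl1s : l1e s ≤ ENNReal.ofReal R := by
    rw [l1e_eq hs_abs, hμR]
  have hms : Memℓp s 2 := (memℓp_two_iff s).mpr hs2
  refine ⟨⟨hms, hl1s⟩, ?_⟩
  intro x hx2 hx1 hxne
  have ha2 : Summable (fun i => (a i)^2) := (memℓp_two_iff a).mp ha
  have hx2' : Summable (fun i => (x i)^2) := (memℓp_two_iff x).mp hx2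
  have hx_abs : Summable (fun i => |x i|) :=
    l1e_summable (lt_of_le_of_lt hx1 ENNReal.ofReal_lt_top).ne
  have hx_le : ∑' i, |x i| ≤ R := by
    rw [l1e_eq hx_abs] at hx1
    have := ENNReal.toReal_mono ENNReal.ofReal_ne_top hx1
    rwa [ENNReal.toReal_ofReal (tsum_nonneg fun i => abs_nonneg _),
      ENNReal.toReal_ofReal hR.le] at this
  -- summabilities
  have hxs2 : Summable (fun i => (x i - s i)^2) := by
    apply Summable.of_nonneg_of_le (fun i => sq_nonneg _) (fun i => ?_)
      ((hx2'.mul_left 2).add (hs2.mul_left 2))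
    nlinarith [sq_nonneg (x i + s i)]
  have hsa2 : Summable (fun i => (s i - a i)^2) := by
    apply Summable.of_nonneg_of_le (fun i => sq_nonneg _) (fun i => ?_)
      ((hs2.mul_left 2).add (ha2.mul_left 2))
    nlinarith [sq_nonneg (s i + a i)]
  have hxa2 : Summable (fun i => (x i - a i)^2) := by
    apply Summable.of_nonneg_of_le (fun i => sq_nonneg _) (fun i => ?_)
      ((hx2'.mul_left 2).add (ha2.mul_left 2))
    nlinarith [sq_nonneg (x i + a i)]
  have hcross : Summable (fun i => (x i - s i) * (a i - s i)) := by
    apply Summable.of_abs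
    apply Summable.of_nonneg_of_le (fun i => abs_nonneg _) (fun i => ?_)
      ((hx_abs.add hs_abs).mul_right μ)
    rw [abs_mul]
    have h1 : |x i - s i| ≤ |x i| + |s i| := abs_sub _ _
    have h2 : |a i - s i| ≤ μ := soft_diff_le μ hμ (a i)
    calc |x i - s i| * |a i - s i| ≤ (|x i| + |s i|) * μ := by
          apply mul_le_mul h1 h2 (abs_nonneg _)
          positivity
      _ = (|x i| + |s i|) * μ := rfl
  -- cross term nonpositive
  have hcross_le : ∑' i, (x i - s i) * (a i - s i) ≤ 0 := by
    have h1 : ∑' i, (x i - s i) * (a i - s i) ≤ ∑' i, μ * (|x i| - |s i|) :=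
      Summable.tsum_le_tsum (fun i => soft_key μ hμ (x i) (a i)) hcross
        ((hx_abs.sub hs_abs).mul_left μ)
    have h2 : ∑' i, μ * (|x i| - |s i|) = μ * (∑' i, |x i| - ∑' i, |s i|) := by
      rw [tsum_mul_left, Summable.tsum_sub hx_abs hs_abs]
    rw [h2, hμR] at h1
    nlinarith
  -- decomposition
  have hdecomp : ∑' i, (x i - a i)^2
      = (∑' i, (s i - a i)^2) + ((∑' i, (x i - s i)^2)
        - 2 * ∑' i, (x i - s i) * (a i - s i)) := by
    calc ∑' i, (x i - a i)^2
        = ∑' i, ((s i - a i)^2 + ((x i - s i)^2 - 2 * ((x i - s i) * (a i - s i)))) :=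
          tsum_congr fun i => by ring
      _ = _ := by
          rw [Summable.tsum_add hsa2 (hxs2.sub (hcross.mul_left 2)),
            Summable.tsum_sub hxs2 (hcross.mul_left 2), tsum_mul_left]
  -- strict positivity
  have hpos : 0 < ∑' i, (x i - s i)^2 := by
    have : ∃ j, x j ≠ s j := by
      by_contra hc
      push_neg at hc
      exact hxne (funext hc)
    obtain ⟨j, hj⟩ := this
    exact Summable.tsum_pos hxs2 (fun i => sq_nonneg _) j
      ((even_two.pow_pos_iff two_ne_zero).mpr (sub_ne_zero.mpr hj))
  rw [hdecomp]
  linarith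
end

section
/- If ‖a‖₁ > R > 0 for a ∈ ℓ²(Λ), then there exists μ > 0 with ‖S_μ(a)‖₁ = R. -/
open scoped ENNReal NNReal

/-!
Since `a ∈ ℓ²` tends to `0`, only finitely many `|aᵢ|` exceed a given `μ₁ > 0`, so on `[μ₁, ∞)` the
map `μ ↦ ‖S_μ(a)‖₁ = ∑ᵢ max (|aᵢ| - μ) 0` is a finite sum of continuous functions. Some finite
partial sum of `|aᵢ|` exceeds `R`, hence so does `‖S_μ₁(a)‖₁` for `μ₁` small enough, while
`‖S_μ(a)‖₁ = 0` once `μ ≥ sup |aᵢ|`. The intermediate value theorem gives the threshold.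
-/

open Filter Topology Set

theorem abs_softThr {μ : ℝ} (hμ : 0 ≤ μ) (t : ℝ) : |softThr μ t| = max (|t| - μ) 0 := by
  rw [softThr, abs_mul, abs_of_nonneg (le_max_right (|t| - μ) 0)]
  rcases lt_trichotomy t 0 with ht | rfl | ht
  · rw [Real.sign_of_neg ht, abs_neg, abs_one, one_mul]
  · simp [hμ]
  · rw [Real.sign_of_pos ht, abs_one, one_mul]

theorem Memℓp.tendsto_cofinite_zero {I E : Type*} [NormedAddCommGroup E] {p : ℝ≥0∞}
    {f : I → E} (hf : Memℓp f p) (hp : 0 < p.toReal) : Tendsto f cofinite (𝓝 0) := by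
  rw [tendsto_zero_iff_norm_tendsto_zero]
  have hroot : Tendsto (fun i => (‖f i‖ ^ p.toReal) ^ p.toReal⁻¹) cofinite (𝓝 0) := by
    simpa [Function.comp_def, Real.zero_rpow (inv_pos.2 hp).ne'] using
      (Real.continuousAt_rpow_const 0 _ (Or.inr (inv_pos.2 hp).le)).tendsto.comp
        (hf.summable hp).tendsto_cofinite_zero
  refine hroot.congr fun i => ?_
  rw [← Real.rpow_mul (norm_nonneg _), mul_inv_cancel₀ hp.ne', Real.rpow_one]

theorem finite_setOf_lt_norm {I E : Type*} [NormedAddCommGroup E] {f : I → E}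
    (hf : Tendsto f cofinite (𝓝 0)) {μ : ℝ} (hμ : 0 < μ) : {i | μ < ‖f i‖}.Finite := by
  refine (eventually_cofinite.1 (hf.eventually (Metric.ball_mem_nhds 0 hμ))).subset ?_
  intro i hi
  simpa using hi.le

theorem exists_finset_lt_sum_abs_of_lt_l1e {I : Type*} {a : I → ℝ} {R : ℝ}
    (haR : ENNReal.ofReal R < l1e a) : ∃ F : Finset I, R < ∑ i ∈ F, |a i| := by
  rw [l1e, ENNReal.tsum_eq_iSup_sum, lt_iSup_iff] at haR
  obtain ⟨F, hF⟩ := haR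
  refine ⟨F, ?_⟩
  have hsum : ∑ i ∈ F, (‖a i‖₊ : ℝ≥0∞) = ENNReal.ofReal (∑ i ∈ F, |a i|) := by
    rw [ENNReal.ofReal_sum_of_nonneg fun i _ => abs_nonneg _]
    exact Finset.sum_congr rfl fun i _ => by
      rw [← Real.norm_eq_abs, ofReal_norm, enorm_eq_nnnorm]
  rw [hsum, ENNReal.ofReal_lt_ofReal_iff'] at hF
  exact hF.1

theorem exists_pos_lt_sum_max_abs_sub {I : Type*} {a : I → ℝ} {F : Finset I} {R : ℝ}
    (hF : R < ∑ i ∈ F, |a i|) : ∃ μ > 0, R < ∑ i ∈ F, max (|a i| - μ) 0 := by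
  have hcont : Continuous fun μ : ℝ => ∑ i ∈ F, max (|a i| - μ) 0 := by fun_prop
  have hF0 : R < ∑ i ∈ F, max (|a i| - 0) 0 := by simpa using hF
  have hnear : ∀ᶠ μ in 𝓝[>] (0 : ℝ), R < ∑ i ∈ F, max (|a i| - μ) 0 :=
    nhdsWithin_le_nhds ((hcont.tendsto 0).eventually (lt_mem_nhds hF0))
  obtain ⟨μ, hμR, hμ⟩ := (hnear.and self_mem_nhdsWithin).exists
  exact ⟨μ, hμ, hμR⟩

section SoftThresholding

variable {I : Type*} {a : I → ℝ} {μ : ℝ}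

theorem tsum_abs_softThr_eq_sum {S : Finset I} (hμ : 0 ≤ μ) (hS : ∀ i ∉ S, |a i| ≤ μ) :
    ∑' i, |softThr μ (a i)| = ∑ i ∈ S, max (|a i| - μ) 0 := by
  rw [tsum_eq_sum fun i hi => by rw [abs_softThr hμ, max_eq_right (by linarith [hS i hi])]]
  exact Finset.sum_congr rfl fun i _ => abs_softThr hμ _

theorem sum_max_abs_sub_le_tsum_abs_softThr (F : Finset I) (hμ : 0 ≤ μ)
    (hfin : {i | μ < |a i|}.Finite) :
    ∑ i ∈ F, max (|a i| - μ) 0 ≤ ∑' i, |softThr μ (a i)| := by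
  classical
  rw [tsum_abs_softThr_eq_sum (S := hfin.toFinset ∪ F) hμ fun i hi => by
    simpa using fun h => hi (Finset.mem_union_left _ (hfin.mem_toFinset.2 h))]
  exact Finset.sum_le_sum_of_subset_of_nonneg Finset.subset_union_right
    fun i _ _ => le_max_right _ _

theorem continuousOn_tsum_abs_softThr (hμ : 0 ≤ μ) (hfin : {i | μ < |a i|}.Finite) :
    ContinuousOn (fun ν => ∑' i, |softThr ν (a i)|) (Ici μ) := by
  have hcont : Continuous fun ν : ℝ => ∑ i ∈ hfin.toFinset, max (|a i| - ν) 0 := by fun_prop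
  refine hcont.continuousOn.congr fun ν hν => tsum_abs_softThr_eq_sum (hμ.trans hν) fun i hi => ?_
  simpa using (not_lt.1 fun h => hi (hfin.mem_toFinset.2 h)).trans hν

theorem exists_ge_tsum_abs_softThr_eq_zero (hμ : 0 ≤ μ) (hfin : {i | μ < |a i|}.Finite) :
    ∃ ν ≥ μ, ∑' i, |softThr ν (a i)| = 0 := by
  set S := hfin.toFinset
  have hμν : μ ≤ μ + ∑ j ∈ S, |a j| :=
    le_add_of_nonneg_right (Finset.sum_nonneg fun j _ => abs_nonneg (a j))
  have hbound : ∀ i, |a i| ≤ μ + ∑ j ∈ S, |a j| := fun i => by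
    by_cases hi : i ∈ S
    · linarith [Finset.single_le_sum (f := fun j => |a j|) (fun j _ => abs_nonneg _) hi]
    · exact (not_lt.1 fun h : μ < |a i| => hi (hfin.mem_toFinset.2 h)).trans hμν
  refine ⟨_, hμν, ?_⟩
  rw [tsum_abs_softThr_eq_sum (S := ∅) (hμ.trans hμν) fun i _ => hbound i, Finset.sum_empty]

end SoftThresholding

theorem stmt4_general {I : Type*} (a : I → ℝ) (ha : Memℓp a 2) (R : ℝ) (hR : 0 < R)
    (haR : ENNReal.ofReal R < l1e a) :
    ∃ μ : ℝ, 0 < μ ∧ ∑' i, |softThr μ (a i)| = R := by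
  obtain ⟨F, hF⟩ := exists_finset_lt_sum_abs_of_lt_l1e haR
  obtain ⟨μ₁, hμ₁, hRμ₁⟩ := exists_pos_lt_sum_max_abs_sub hF
  have hfin : {i | μ₁ < |a i|}.Finite := by
    simpa using finite_setOf_lt_norm (ha.tendsto_cofinite_zero (by norm_num)) hμ₁
  obtain ⟨μ₂, hμ₁₂, hμ₂⟩ := exists_ge_tsum_abs_softThr_eq_zero hμ₁.le hfin
  have hμ₁R : R < ∑' i, |softThr μ₁ (a i)| :=
    hRμ₁.trans_le (sum_max_abs_sub_le_tsum_abs_softThr F hμ₁.le hfin)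
  obtain ⟨μ, hμ, hμR⟩ := intermediate_value_Icc' hμ₁₂
    ((continuousOn_tsum_abs_softThr hμ₁.le hfin).mono Icc_subset_Ici_self)
    ⟨hμ₂ ▸ hR.le, hμ₁R.le⟩
  exact ⟨μ, hμ₁.trans_le hμ.1, hμR⟩

/-- If `a ∈ ℓ²` and `‖a‖₁ > R > 0`, then there exists `μ > 0` with `‖S_μ(a)‖₁ = R`. -/
theorem stmt4 {I : Type*} [Countable I] (a : I → ℝ) (ha : Memℓp a 2) (R : ℝ) (hR : 0 < R)
    (haR : ENNReal.ofReal R < l1e a) :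
    ∃ μ : ℝ, 0 < μ ∧ ∑' i, |softThr μ (a i)| = R :=
  stmt4_general a ha R hR haR
end

section
/- Let u be the common image Kx̃ of all minimizers x̃ of ‖Kx-y‖² on B_R, and assume K*(y-u) ≠ 0. Set τ = ‖K*(y-u)‖_∞. Then for every minimizer x̃ and every index λ with x̃_λ ≠ 0, one has |(K*(y-u))_λ| = τ and sign(x̃_λ) = sign((K*(y-u))_λ). -/
/-!
With `g = K*(y - u)`, a minimizer `x̃` satisfies the first-order condition `⟪g, v⟫ ≤ ⟪g, x̃⟫`
for all `v ∈ B_R`. Testing it with `v = ±R e_j` gives `R ‖g‖_∞ ≤ ⟪g, x̃⟫`, while Hölder gives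
`⟪g, x̃⟫ ≤ ‖g‖_∞ ‖x̃‖₁ ≤ R ‖g‖_∞`. So the termwise bound `g_k x̃_k ≤ ‖g‖_∞ |x̃_k|` is an equality
for every `k`, and where `x̃_k ≠ 0` this forces `|g_k| = ‖g‖_∞` and equal signs.
-/

open scoped ENNReal NNReal

noncomputable def l1Ball (I : Type*) (R : ℝ) : Set (lp (fun _ : I => ℝ) 2) :=
  {x | (∑' i, (‖x i‖₊ : ℝ≥0∞)) ≤ ENNReal.ofReal R}

section VariationalInequality

variable {E H : Type*} [NormedAddCommGroup E] [InnerProductSpace ℝ E] [CompleteSpace E]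
  [NormedAddCommGroup H] [InnerProductSpace ℝ H] [CompleteSpace H]

theorem isMaxOn_inner_adjoint_of_isMinOn {K : E →L[ℝ] H} {y : H} {s : Set E} (hs : Convex ℝ s)
    {x : E} (hx : x ∈ s) (hmin : IsMinOn (fun w => ‖K w - y‖ ^ 2) s x) :
    IsMaxOn (inner ℝ (K.adjoint (y - K x))) s x := by
  refine isMaxOn_iff.2 fun w hw => ?_
  have hderiv : HasFDerivWithinAt (fun w => ‖K w - y‖ ^ 2)
      (2 • (innerSL ℝ (K x - y)).comp K) s x :=
    (K.hasFDerivAt.sub_const y).norm_sq.hasFDerivWithinAt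
  have hfermat := hmin.localize.hasFDerivWithinAt_nonneg hderiv
    (sub_mem_posTangentConeAt_of_segment_subset (hs.segment_subset hx hw))
  simp only [smul_apply, ContinuousLinearMap.comp_apply, innerSL_apply_apply,
    nsmul_eq_mul, Nat.cast_ofNat] at hfermat
  rw [ContinuousLinearMap.adjoint_inner_left, ContinuousLinearMap.adjoint_inner_left,
    ← sub_nonpos, ← inner_sub_right, ← map_sub, ← neg_sub (K x), inner_neg_left]
  linarith

end VariationalInequality

section L1Ball

variable {I : Type*}

theorem mem_l1Ball_iff {R : ℝ} (hR : 0 ≤ R) {x : lp (fun _ : I => ℝ) 2} :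
    x ∈ l1Ball I R ↔ Summable (fun i => |x i|) ∧ ∑' i, |x i| ≤ R := by
  have hofReal : ∀ i, (‖x i‖₊ : ℝ≥0∞) = ENNReal.ofReal |x i| := fun i => by
    rw [← enorm_eq_nnnorm, Real.enorm_eq_ofReal_abs]
  simp only [l1Ball, Set.mem_ofPred_eq]
  constructor
  · intro hx
    have hsum : Summable (fun i => |x i|) := by
      have hfin := (hx.trans_lt ENNReal.ofReal_lt_top).ne
      simpa [Real.norm_eq_abs] using
        NNReal.summable_coe.mpr (ENNReal.tsum_coe_ne_top_iff_summable.mp hfin)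
    refine ⟨hsum, ?_⟩
    rwa [funext hofReal, ← ENNReal.ofReal_tsum_of_nonneg (fun _ => abs_nonneg _) hsum,
      ENNReal.ofReal_le_ofReal_iff hR] at hx
  · rintro ⟨hsum, hle⟩
    rw [funext hofReal, ← ENNReal.ofReal_tsum_of_nonneg (fun _ => abs_nonneg _) hsum]
    exact ENNReal.ofReal_le_ofReal hle

theorem convex_l1Ball (R : ℝ) : Convex ℝ (l1Ball I R) := by
  intro x hx z hz a b ha hb hab
  have hpointwise : ∀ i, (‖(a • x + b • z) i‖₊ : ℝ≥0∞)
      ≤ ENNReal.ofReal a * ‖x i‖₊ + ENNReal.ofReal b * ‖z i‖₊ := fun i => by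
    simp only [← enorm_eq_nnnorm, lp.coeFn_add, lp.coeFn_smul, Pi.add_apply, Pi.smul_apply]
    refine (enorm_add_le _ _).trans_eq ?_
    rw [enorm_smul, enorm_smul, Real.enorm_of_nonneg ha, Real.enorm_of_nonneg hb]
  calc ∑' i, (‖(a • x + b • z) i‖₊ : ℝ≥0∞)
      ≤ ∑' i, (ENNReal.ofReal a * ‖x i‖₊ + ENNReal.ofReal b * ‖z i‖₊) :=
        ENNReal.tsum_le_tsum hpointwise
    _ = ENNReal.ofReal a * ∑' i, (‖x i‖₊ : ℝ≥0∞)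
          + ENNReal.ofReal b * ∑' i, (‖z i‖₊ : ℝ≥0∞) := by
        rw [ENNReal.tsum_add, ENNReal.tsum_mul_left, ENNReal.tsum_mul_left]
    _ ≤ ENNReal.ofReal a * ENNReal.ofReal R + ENNReal.ofReal b * ENNReal.ofReal R := by
        gcongr
        exacts [hx, hz]
    _ = ENNReal.ofReal R := by
        rw [← add_mul, ← ENNReal.ofReal_add ha hb, hab, ENNReal.ofReal_one, one_mul]

theorem zero_mem_l1Ball (R : ℝ) : (0 : lp (fun _ : I => ℝ) 2) ∈ l1Ball I R := by
  simp [l1Ball]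

theorem single_mem_l1Ball [DecidableEq I] {R c : ℝ} (hc : |c| ≤ R) (j : I) :
    lp.single 2 j c ∈ l1Ball I R := by
  rw [l1Ball, Set.mem_ofPred_eq, tsum_eq_single j fun k hk => by simp [hk],
    lp.single_apply_self, ← enorm_eq_nnnorm, Real.enorm_eq_ofReal_abs]
  exact ENNReal.ofReal_le_ofReal hc

theorem abs_apply_le_iSup_abs (g : lp (fun _ : I => ℝ) 2) (j : I) : |g j| ≤ ⨆ k, |g k| :=
  le_ciSup ⟨‖g‖, by rintro _ ⟨k, rfl⟩; exact lp.norm_apply_le_norm two_ne_zero g k⟩ j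

theorem iSup_abs_apply_pos {g : lp (fun _ : I => ℝ) 2} (hg : g ≠ 0) : 0 < ⨆ k, |g k| := by
  obtain ⟨j, hj⟩ : ∃ j, g j ≠ 0 := by
    by_contra! h
    exact hg (lp.ext (funext h))
  exact (abs_pos.2 hj).trans_le (abs_apply_le_iSup_abs g j)

theorem summable_apply_mul_apply (g x : lp (fun _ : I => ℝ) 2) :
    Summable (fun k => g k * x k) :=
  (lp.summable_inner g x).congr fun _ => Real.inner_apply _ _

theorem inner_eq_tsum_apply_mul_apply (g x : lp (fun _ : I => ℝ) 2) :
    inner ℝ g x = ∑' k, g k * x k := by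
  simp only [lp.inner_eq_tsum, Real.inner_apply]

theorem mul_iSup_abs_le_inner_of_isMaxOn {g x : lp (fun _ : I => ℝ) 2} {R : ℝ} (hR : 0 ≤ R)
    (hmax : IsMaxOn (inner ℝ g) (l1Ball I R) x) : R * ⨆ k, |g k| ≤ inner ℝ g x := by
  classical
  have htest : ∀ j c, |c| ≤ R → c * g j ≤ inner ℝ g x := fun j c hc => by
    simpa [lp.inner_single_right, Real.inner_apply] using hmax (single_mem_l1Ball hc j)
  rw [Real.mul_iSup_of_nonneg hR]
  refine Real.iSup_le (fun j => ?_) (by simpa using hmax (zero_mem_l1Ball R))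
  calc R * |g j| = |R * g j| := by rw [abs_mul, abs_of_nonneg hR]
    _ ≤ inner ℝ g x := abs_le'.2 ⟨htest j R (abs_of_nonneg hR).le,
        by simpa using htest j (-R) (by rw [abs_neg, abs_of_nonneg hR])⟩

theorem apply_mul_eq_iSup_abs_mul_abs_of_isMaxOn {g x : lp (fun _ : I => ℝ) 2} {R : ℝ}
    (hR : 0 ≤ R) (hx : x ∈ l1Ball I R) (hmax : IsMaxOn (inner ℝ g) (l1Ball I R) x) (k : I) :
    g k * x k = (⨆ j, |g j|) * |x k| := by
  set τ := ⨆ j, |g j|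
  obtain ⟨hsum, hxR⟩ := (mem_l1Ball_iff hR).1 hx
  have hterm : ∀ k, g k * x k ≤ τ * |x k| := fun k =>
    (le_abs_self _).trans (by rw [abs_mul]; gcongr; exact abs_apply_le_iSup_abs g k)
  have hgap : Summable (fun k => τ * |x k| - g k * x k) :=
    (hsum.mul_left τ).sub (summable_apply_mul_apply g x)
  have hgap_sum : ∑' k, (τ * |x k| - g k * x k) ≤ 0 := by
    rw [(hsum.mul_left τ).tsum_sub (summable_apply_mul_apply g x), tsum_mul_left,
      ← inner_eq_tsum_apply_mul_apply, sub_nonpos]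
    calc τ * ∑' k, |x k| ≤ R * τ := by
          rw [mul_comm]
          exact mul_le_mul_of_nonneg_right hxR (Real.iSup_nonneg fun _ => abs_nonneg _)
      _ ≤ inner ℝ g x := mul_iSup_abs_le_inner_of_isMaxOn hR hmax
  have := hgap.le_tsum k fun j _ => sub_nonneg.2 (hterm j)
  linarith [hterm k]

end L1Ball

theorem abs_eq_and_sign_eq_of_mul_eq_mul_abs {g x τ : ℝ} (hτ : 0 < τ) (hg : |g| ≤ τ)
    (hx : x ≠ 0) (h : g * x = τ * |x|) : |g| = τ ∧ Real.sign x = Real.sign g := by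
  have hpos : 0 < g * x := h ▸ mul_pos hτ (abs_pos.2 hx)
  refine ⟨le_antisymm hg (le_of_mul_le_mul_right ?_ (abs_pos.2 hx)), ?_⟩
  · rw [← h, ← abs_mul]
    exact le_abs_self _
  · rcases mul_pos_iff.1 hpos with ⟨hg_pos, hx_pos⟩ | ⟨hg_neg, hx_neg⟩
    · rw [Real.sign_of_pos hg_pos, Real.sign_of_pos hx_pos]
    · rw [Real.sign_of_neg hg_neg, Real.sign_of_neg hx_neg]

theorem stmt11_general {I : Type*} {H : Type*} [NormedAddCommGroup H]
    [InnerProductSpace ℝ H] [CompleteSpace H]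
    (K : lp (fun _ : I => ℝ) 2 →L[ℝ] H) (y : H) (R : ℝ) (hR : 0 < R)
    (u : H)
    (hu : ∀ xt ∈ l1Ball I R,
      (∀ w ∈ l1Ball I R, ‖K xt - y‖ ^ 2 ≤ ‖K w - y‖ ^ 2) → K xt = u)
    (hne : (ContinuousLinearMap.adjoint K) (y - u) ≠ 0) :
    ∀ xt ∈ l1Ball I R,
      (∀ w ∈ l1Ball I R, ‖K xt - y‖ ^ 2 ≤ ‖K w - y‖ ^ 2) →
      ∀ i : I, xt i ≠ 0 →
        |(ContinuousLinearMap.adjoint K) (y - u) i| =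
            (⨆ j : I, |(ContinuousLinearMap.adjoint K) (y - u) j|) ∧
          Real.sign (xt i) = Real.sign ((ContinuousLinearMap.adjoint K) (y - u) i) := by
  intro xt hxt hmin i hi
  have hmax : IsMaxOn (inner ℝ (K.adjoint (y - u))) (l1Ball I R) xt := by
    rw [← hu xt hxt hmin]
    exact isMaxOn_inner_adjoint_of_isMinOn (convex_l1Ball R) hxt (isMinOn_iff.2 hmin)
  exact abs_eq_and_sign_eq_of_mul_eq_mul_abs (iSup_abs_apply_pos hne) (abs_apply_le_iSup_abs _ i)
    hi (apply_mul_eq_iSup_abs_mul_abs_of_isMaxOn hR.le hxt hmax i)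

/-- Let `u` be the common image under `K` of all minimizers of `‖Kx-y‖²` on `B_R`, with
`K*(y-u) ≠ 0`, and `τ = ‖K*(y-u)‖_∞`. Then for every minimizer `xt` and every index `i` with
`xt i ≠ 0`, one has `|(K*(y-u)) i| = τ` and `sign (xt i) = sign ((K*(y-u)) i)`. -/
theorem stmt11 {I : Type*} [Countable I] {H : Type*} [NormedAddCommGroup H]
    [InnerProductSpace ℝ H] [CompleteSpace H]
    (K : lp (fun _ : I => ℝ) 2 →L[ℝ] H) (y : H) (R : ℝ) (hR : 0 < R)
    (u : H)
    (hu : ∀ xt ∈ l1Ball I R,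
      (∀ w ∈ l1Ball I R, ‖K xt - y‖ ^ 2 ≤ ‖K w - y‖ ^ 2) → K xt = u)
    (hex : ∃ xt ∈ l1Ball I R, ∀ w ∈ l1Ball I R, ‖K xt - y‖ ^ 2 ≤ ‖K w - y‖ ^ 2)
    (hne : (ContinuousLinearMap.adjoint K) (y - u) ≠ 0) :
    ∀ xt ∈ l1Ball I R,
      (∀ w ∈ l1Ball I R, ‖K xt - y‖ ^ 2 ≤ ‖K w - y‖ ^ 2) →
      ∀ i : I, xt i ≠ 0 →
        |(ContinuousLinearMap.adjoint K) (y - u) i| =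
            (⨆ j : I, |(ContinuousLinearMap.adjoint K) (y - u) j|) ∧
          Real.sign (xt i) = Real.sign ((ContinuousLinearMap.adjoint K) (y - u) i) :=
  stmt11_general K y R hR u hu hne
end

section
/- Under the same assumptions (Condition (B): 1 ≤ β^{(n)} ≤ β̄ and β^{(n)}‖K(x^{(n+1)} - x^{(n)})‖² ≤ r‖x^{(n+1)} - x^{(n)}‖² with r = ‖K*K‖ < 1), the series Σ_n ‖x^{(n+1)} - x^{(n)}‖² converges; in particular ‖x^{(n+1)} - x^{(n)}‖ → 0 as n → ∞. -/
open scoped ENNReal NNReal RealInnerProductSpace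

private lemma stmt16_aux {s q t bn bb r : ℝ} (hs0 : 0 ≤ s)
    (h3 : s ≤ 2 * (bn * -t)) (hB2' : bn * q ≤ r * s)
    (hb1 : 1 ≤ bn) (hb2 : bn ≤ bb) (hr1 : r < 1) :
    (1 - r) * s ≤ bb * (-2 * t - q) := by
  have h1 : (1 - r) * s ≤ bn * (-2 * t - q) := by nlinarith
  have hpos : 0 ≤ -2 * t - q := by
    have h2 : 0 ≤ bn * (-2 * t - q) :=
      le_trans (mul_nonneg (by linarith) hs0) h1
    by_contra h
    push_neg at h
    nlinarith
  calc (1 - r) * s ≤ bn * (-2 * t - q) := h1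
    _ ≤ bb * (-2 * t - q) := mul_le_mul_of_nonneg_right hb2 hpos

/-- Under Condition (B) (`1 ≤ β n ≤ β̄` and `β n ‖K (x (n+1) - x n)‖² ≤ r ‖x (n+1) - x n‖²`
with `r = ‖K*K‖ < 1`), the series `Σ ‖x (n+1) - x n‖²` converges; in particular
`‖x (n+1) - x n‖ → 0`. -/
theorem stmt16 {I : Type*} [Countable I] {H : Type*} [NormedAddCommGroup H]
    [InnerProductSpace ℝ H] [CompleteSpace H]
    (K : lp (fun _ : I => ℝ) 2 →L[ℝ] H) (hK : ‖K‖ < 1) (y : H) (R : ℝ) (hR : 0 < R)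
    (r : ℝ) (hr : r = ‖(ContinuousLinearMap.adjoint K).comp K‖) (hr1 : r < 1)
    (β : ℕ → ℝ) (βbar : ℝ) (hβ1 : ∀ n, 1 ≤ β n) (hβ2 : ∀ n, β n ≤ βbar)
    (x : ℕ → lp (fun _ : I => ℝ) 2)
    (hiter : ∀ n : ℕ, x (n + 1) ∈ l1Ball I R ∧
      ∀ w ∈ l1Ball I R,
        ‖x (n + 1) - (x n + β n • (ContinuousLinearMap.adjoint K) (y - K (x n)))‖ ≤
          ‖w - (x n + β n • (ContinuousLinearMap.adjoint K) (y - K (x n)))‖)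
    (hB2 : ∀ n : ℕ, β n * ‖K (x (n + 1) - x n)‖ ^ 2 ≤ r * ‖x (n + 1) - x n‖ ^ 2) :
    Summable (fun n : ℕ => ‖x (n + 1) - x n‖ ^ 2) ∧
    Filter.Tendsto (fun n : ℕ => ‖x (n + 1) - x n‖) Filter.atTop (nhds 0) := by
  have hr0 : 0 ≤ r := hr ▸ norm_nonneg _
  have hβbar : (1:ℝ) ≤ βbar := le_trans (hβ1 0) (hβ2 0)
  set D : ℕ → ℝ := fun n => ‖K (x n) - y‖ ^ 2 with hD
  set a : ℕ → ℝ := fun n => ‖x (n + 1) - x n‖ ^ 2 with ha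
  -- key descent inequality
  have key : ∀ n, x n ∈ l1Ball I R → (1 - r) * a n ≤ βbar * (D n - D (n + 1)) := by
    intro n hmem
    have h1 := (hiter n).2 (x n) hmem
    set u := x (n + 1) - x n with hu
    set w := (ContinuousLinearMap.adjoint K) (y - K (x n)) with hw
    have e1 : x (n + 1) - (x n + β n • w) = u - β n • w := by rw [hu]; abel
    have e2 : x n - (x n + β n • w) = -(β n • w) := by abel
    rw [e1, e2, norm_neg] at h1
    have h2 : ‖u - β n • w‖ ^ 2 ≤ ‖β n • w‖ ^ 2 :=
      pow_le_pow_left₀ (norm_nonneg _) h1 2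
    rw [norm_sub_sq_real] at h2
    have hi : ⟪u, β n • w⟫ = β n * ⟪K u, y - K (x n)⟫ := by
      rw [real_inner_smul_right, hw, ContinuousLinearMap.adjoint_inner_right]
    have h3 : ‖u‖ ^ 2 ≤ 2 * (β n * ⟪K u, y - K (x n)⟫) := by
      rw [← hi]; nlinarith [h2]
    have hsym : ⟪K u, y - K (x n)⟫ = -⟪K (x n) - y, K u⟫ := by
      rw [real_inner_comm, ← inner_neg_left, neg_sub]
    have e3 : K (x (n + 1)) - y = (K (x n) - y) + K u := by
      rw [hu, map_sub]; abel
    have h4 : D (n + 1) = D n + 2 * ⟪K (x n) - y, K u⟫ + ‖K u‖ ^ 2 := by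
      simp only [hD]
      rw [e3, norm_add_sq_real]
    have hB2' : β n * ‖K u‖ ^ 2 ≤ r * ‖u‖ ^ 2 := hB2 n
    have hb1 := hβ1 n
    have hb2 := hβ2 n
    rw [hsym] at h3
    have : a n = ‖u‖ ^ 2 := rfl
    rw [this, h4]
    have e4 : D n - (D n + 2 * ⟪K (x n) - y, K u⟫ + ‖K u‖ ^ 2)
        = -2 * ⟪K (x n) - y, K u⟫ - ‖K u‖ ^ 2 := by ring
    rw [e4]
    exact stmt16_aux (sq_nonneg _) h3 (hB2 n) hb1 hb2 hr1
  have hDnonneg : ∀ n, 0 ≤ D n := fun n => sq_nonneg _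
  have hkey' : ∀ n, (1 - r) * a (n + 1) ≤ βbar * (D (n + 1) - D (n + 2)) :=
    fun n => key (n + 1) (hiter n).1
  have hsum : ∀ N, ∑ i ∈ Finset.range N, (1 - r) * a (i + 1) ≤ βbar * D 1 := by
    intro N
    calc ∑ i ∈ Finset.range N, (1 - r) * a (i + 1)
        ≤ ∑ i ∈ Finset.range N, βbar * (D (i + 1) - D (i + 2)) :=
          Finset.sum_le_sum fun i _ => hkey' i
      _ = βbar * ∑ i ∈ Finset.range N, (D (i + 1) - D (i + 2)) := by
          rw [Finset.mul_sum]
      _ = βbar * (D 1 - D (N + 1)) := by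
          rw [Finset.sum_range_sub' (fun i => D (i + 1))]
      _ ≤ βbar * D 1 := by nlinarith [hDnonneg (N + 1)]
  have hs1 : Summable (fun n => (1 - r) * a (n + 1)) :=
    summable_of_sum_range_le
      (fun n => mul_nonneg (by linarith) (sq_nonneg _)) hsum
  have hne : (1 : ℝ) - r ≠ 0 := by linarith
  have hs2 : Summable (fun n => a (n + 1)) := by
    have h := hs1.mul_left (1 - r)⁻¹
    simpa [← mul_assoc, inv_mul_cancel₀ hne] using h
  have hsa : Summable a := (summable_nat_add_iff 1).mp hs2
  refine ⟨hsa, ?_⟩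
  have h0 := hsa.tendsto_atTop_zero
  have h1 : Filter.Tendsto (fun n => Real.sqrt (a n)) Filter.atTop (nhds (Real.sqrt 0)) :=
    (Real.continuous_sqrt.continuousAt.tendsto).comp h0
  have h2 : (fun n => Real.sqrt (a n)) = fun n => ‖x (n + 1) - x n‖ := by
    funext n
    simp only [ha]
    exact Real.sqrt_sq (norm_nonneg _)
  rw [h2, Real.sqrt_zero] at h1
  exact h1
end
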